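/- For n ≥ 1 and any point x on the unit sphere S^n ⊂ ℝ^{n+1}, and any vectors u, v ∈ ℝ^{n+1} tangent to S^n at x (i.e., u·x = v·x = 0), one has (DΦ_n(x)u)·(DΦ_n(x)v) = (2(n+1)/n)(u·v). In particular, Φ_n restricted to S^n is a conformal immersion into S^{m(n)−1} with constant conformal factor a_n = √(2(n+1)/n). -/

import Mathlib

/-!
The derivative of `Φ_n` is computed block by block from the recursive definition: a rescaled
copy of `DΦ_{n-1}` on the first `n` coordinates, the products `x_j x_last`, and one quadratic
term. Summing the contributions of the three blocks shows that the Gram identity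
`(DΦ_n u)·(DΦ_n v) = ((2n+2)/n) |x|² (u·v) + ((2n-2)/n) (x·u)(x·v)` passes from `n - 1` to `n`,
the normalising constants `aCoef` being chosen exactly so that the coefficients match; the case
`n = 1` is the complex squaring map. On the sphere with `u`, `v` tangent only the first term
survives.
-/

def mdim (n : ℕ) : ℕ := n * (n + 3) / 2

noncomputable def aCoef (n : ℕ) : ℝ := Real.sqrt ((2 * n + 2) / n)

/-- The generalized Veronese map `Φ_n : ℝ^{n+1} → ℝ^{m(n)}` defined inductively. -/
noncomputable def Phi : (n : ℕ) → (Fin (n + 1) → ℝ) → Fin (mdim n) → ℝ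
  | 0, _, _ => 0
  | 1, x, i => if (i : ℕ) = 0 then 2 * x 0 * x 1 else x 0 ^ 2 - x 1 ^ 2
  | (n + 2), x, i =>
      aCoef (n + 2) *
        (if h1 : (i : ℕ) < mdim (n + 1) then
          (1 / aCoef (n + 1)) * Phi (n + 1) (fun j => x j.castSucc) ⟨i, h1⟩
        else if h2 : (i : ℕ) < mdim (n + 1) + (n + 2) then
          x ⟨(i : ℕ) - mdim (n + 1), by omega⟩ * x (Fin.last (n + 2))
        else
          (1 / ((n + 2) * aCoef (n + 2))) *
            ((∑ j : Fin (n + 2), x j.castSucc ^ 2) - (n + 2) * x (Fin.last (n + 2)) ^ 2))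

open ContinuousLinearMap Matrix

lemma mdim_add_two (n : ℕ) : mdim (n + 2) = mdim (n + 1) + (n + 2) + 1 := by
  simp only [mdim]
  rw [show (n + 2) * (n + 2 + 3) = (n + 1) * (n + 1 + 3) + (n + 3) * 2 by ring,
    Nat.add_mul_div_right _ _ two_pos]
  ring

lemma aCoef_sq {n : ℕ} (hn : 1 ≤ n) : aCoef n ^ 2 = (2 * n + 2) / n := by
  rw [aCoef, Real.sq_sqrt]
  positivity

lemma aCoef_pos {n : ℕ} (hn : 1 ≤ n) : 0 < aCoef n := by
  rw [aCoef, Real.sqrt_pos]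
  have : (0 : ℝ) < n := by exact_mod_cast hn
  positivity

lemma Fin.sum_eq_three_blocks {M : Type*} [AddCommMonoid M] {N a b : ℕ} (h : N = a + b + 1)
    (f : Fin N → M) :
    ∑ i, f i = ∑ j : Fin a, f ⟨j, by omega⟩ + ∑ j : Fin b, f ⟨a + j, by omega⟩
      + f ⟨a + b, by omega⟩ := by
  subst h
  rw [Fin.sum_univ_castSucc, Fin.sum_univ_add]
  rfl

lemma dotProduct_eq_init_add_last {α : Type*} [Mul α] [AddCommMonoid α] {n : ℕ}
    (x y : Fin (n + 1) → α) :
    x ⬝ᵥ y = Fin.init x ⬝ᵥ Fin.init y + x (Fin.last n) * y (Fin.last n) :=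
  Fin.sum_univ_castSucc _

noncomputable def initCLM (n : ℕ) : (Fin (n + 1) → ℝ) →L[ℝ] (Fin n → ℝ) :=
  pi fun j => proj j.castSucc

noncomputable def DPhi : (n : ℕ) → (Fin (n + 1) → ℝ) → (Fin (n + 1) → ℝ) →L[ℝ] Fin (mdim n) → ℝ
  | 0, _ => 0
  | 1, x => pi fun i =>
      if (i : ℕ) = 0 then (2 * x 1) • proj 0 + (2 * x 0) • proj 1
      else (2 * x 0) • proj 0 - (2 * x 1) • proj 1
  | (n + 2), x => pi fun i =>
      aCoef (n + 2) •
        if h1 : (i : ℕ) < mdim (n + 1) then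
          (1 / aCoef (n + 1)) • (proj ⟨i, h1⟩).comp ((DPhi (n + 1) (Fin.init x)).comp (initCLM _))
        else if h2 : (i : ℕ) < mdim (n + 1) + (n + 2) then
          x (Fin.last _) • proj ⟨i - mdim (n + 1), by omega⟩
            + x ⟨i - mdim (n + 1), by omega⟩ • proj (Fin.last _)
        else
          (1 / ((n + 2) * aCoef (n + 2))) •
            (∑ j : Fin (n + 2), (2 * x j.castSucc) • proj j.castSucc
              - ((n + 2) * (2 * x (Fin.last _))) • proj (Fin.last _))

theorem hasFDerivAt_Phi : ∀ (n : ℕ) (x : Fin (n + 1) → ℝ), HasFDerivAt (Phi n) (DPhi n x) x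
  | 0, x => hasFDerivAt_const _ _
  | 1, x => by
      refine hasFDerivAt_pi'.2 fun i => ?_
      by_cases hi : (i : ℕ) = 0
      · simp only [Phi, DPhi, proj_pi, hi, if_true]
        refine (((hasFDerivAt_apply 0 x).const_mul 2).mul (hasFDerivAt_apply 1 x)).congr_fderiv ?_
        ext w; simp only [_root_.add_apply, _root_.smul_apply, proj_apply, smul_eq_mul]; ring
      · simp only [Phi, DPhi, proj_pi, hi, if_false]
        refine (((hasFDerivAt_apply 0 x).pow 2).sub ((hasFDerivAt_apply 1 x).pow 2)).congr_fderiv ?_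
        ext w; simp
  | (n + 2), x => by
      refine hasFDerivAt_pi'.2 fun i => ?_
      simp only [Phi, DPhi, proj_pi]
      split_ifs with h1 h2
      · exact ((((proj _).hasFDerivAt.comp x ((hasFDerivAt_Phi (n + 1) _).comp x
          (initCLM _).hasFDerivAt)).const_mul _).const_mul _)
      · refine (((hasFDerivAt_apply _ x).mul (hasFDerivAt_apply _ x)).const_mul _).congr_fderiv ?_
        ext w; simp only [smul_add, _root_.add_apply, _root_.smul_apply, proj_apply, smul_eq_mul]
        ring
      · have hsum := HasFDerivAt.fun_sum (u := Finset.univ) fun j (_ : j ∈ Finset.univ) =>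
          (hasFDerivAt_apply (𝕜 := ℝ) (Fin.castSucc j : Fin (n + 3)) x).pow 2
        refine (((hsum.sub (((hasFDerivAt_apply _ x).pow 2).const_mul _)).const_mul _).const_mul
          _).congr_fderiv ?_
        ext w; simp [mul_assoc]

section DPhiAddTwo

variable {n : ℕ} (x w : Fin (n + 3) → ℝ)

lemma DPhi_add_two_apply_lt (j : Fin (mdim (n + 1))) (hj : (j : ℕ) < mdim (n + 2)) :
    DPhi (n + 2) x w ⟨j, hj⟩
      = aCoef (n + 2) / aCoef (n + 1) * DPhi (n + 1) (Fin.init x) (Fin.init w) j := by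
  simp only [DPhi, coe_pi', j.isLt, ↓reduceDIte, _root_.smul_apply, smul_eq_mul]
  rw [← mul_assoc, mul_one_div]
  rfl

lemma DPhi_add_two_apply_mid (j : Fin (n + 2)) (hj : mdim (n + 1) + j < mdim (n + 2)) :
    DPhi (n + 2) x w ⟨mdim (n + 1) + j, hj⟩
      = aCoef (n + 2) * (x (Fin.last _) • Fin.init w + w (Fin.last _) • Fin.init x) j := by
  have hj' : (⟨j, by omega⟩ : Fin (n + 3)) = j.castSucc := rfl
  simp only [DPhi, coe_pi', add_lt_iff_neg_left, not_lt_zero, ↓reduceDIte, add_lt_add_iff_left,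
    Fin.is_lt, add_tsub_cancel_left, hj', _root_.add_apply, _root_.smul_apply, proj_apply,
    smul_eq_mul, Pi.add_apply, Pi.smul_apply, Fin.init]
  ring

lemma DPhi_add_two_apply_last (hj : mdim (n + 1) + (n + 2) < mdim (n + 2)) :
    DPhi (n + 2) x w ⟨mdim (n + 1) + (n + 2), hj⟩
      = 2 / (n + 2) * (Fin.init x ⬝ᵥ Fin.init w - (n + 2) * x (Fin.last _) * w (Fin.last _)) := by
  have ha : 0 < aCoef (n + 2) := aCoef_pos (by omega)
  simp only [DPhi, coe_pi', add_lt_iff_neg_left, not_lt_zero, ↓reduceDIte, lt_self_iff_false,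
    _root_.smul_apply, _root_.sub_apply, _root_.sum_apply, proj_apply, smul_eq_mul, mul_assoc,
    ← Finset.mul_sum, dotProduct, Fin.init]
  field_simp

lemma DPhi_add_two_dotProduct (u v : Fin (n + 3) → ℝ) :
    DPhi (n + 2) x u ⬝ᵥ DPhi (n + 2) x v
      = (aCoef (n + 2) / aCoef (n + 1)) ^ 2
          * (DPhi (n + 1) (Fin.init x) (Fin.init u) ⬝ᵥ DPhi (n + 1) (Fin.init x) (Fin.init v))
        + aCoef (n + 2) ^ 2 * ((x (Fin.last _) • Fin.init u + u (Fin.last _) • Fin.init x)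
          ⬝ᵥ (x (Fin.last _) • Fin.init v + v (Fin.last _) • Fin.init x))
        + (2 / (n + 2)) ^ 2 * (Fin.init x ⬝ᵥ Fin.init u - (n + 2) * x (Fin.last _) * u (Fin.last _))
          * (Fin.init x ⬝ᵥ Fin.init v - (n + 2) * x (Fin.last _) * v (Fin.last _)) := by
  rw [dotProduct, Fin.sum_eq_three_blocks (mdim_add_two n)]
  simp only [DPhi_add_two_apply_lt, DPhi_add_two_apply_mid, DPhi_add_two_apply_last,
    mul_mul_mul_comm (aCoef (n + 2) / aCoef (n + 1)), mul_mul_mul_comm (aCoef (n + 2)),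
    ← Finset.mul_sum, dotProduct]
  ring

end DPhiAddTwo

lemma DPhi_one_dotProduct (x u v : Fin (1 + 1) → ℝ) :
    DPhi 1 x u ⬝ᵥ DPhi 1 x v = 4 * (x ⬝ᵥ x) * (u ⬝ᵥ v) := by
  change ∑ k : Fin 2, _ = _
  simp only [Nat.reduceAdd, DPhi, coe_pi', Fin.val_eq_zero_iff, Fin.sum_univ_two, ↓reduceIte,
    one_ne_zero, _root_.add_apply, _root_.sub_apply, _root_.smul_apply, proj_apply, smul_eq_mul, dotProduct]
  ring

theorem DPhi_dotProduct : ∀ n : ℕ, 1 ≤ n → ∀ x u v : Fin (n + 1) → ℝ,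
    DPhi n x u ⬝ᵥ DPhi n x v
      = (2 * n + 2) / n * (x ⬝ᵥ x) * (u ⬝ᵥ v) + (2 * n - 2) / n * (x ⬝ᵥ u) * (x ⬝ᵥ v)
  | 1, _, x, u, v => by
    rw [DPhi_one_dotProduct]
    norm_num
  | n + 2, _, x, u, v => by
    rw [DPhi_add_two_dotProduct, DPhi_dotProduct (n + 1) (by omega), div_pow,
      aCoef_sq (by omega), aCoef_sq (by omega), dotProduct_eq_init_add_last x x,
      dotProduct_eq_init_add_last u v, dotProduct_eq_init_add_last x u,
      dotProduct_eq_init_add_last x v]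
    simp only [add_dotProduct, dotProduct_add, smul_dotProduct, dotProduct_smul, smul_eq_mul]
    rw [dotProduct_comm (Fin.init u) (Fin.init x)]
    push_cast
    field_simp
    ring

/-- For `x` on the unit sphere and `u, v` tangent at `x`,
`(DΦ_n(x)u)·(DΦ_n(x)v) = (2(n+1)/n)(u·v)`: `Φ_n` restricted to the sphere is a
conformal immersion with conformal factor `a_n = √(2(n+1)/n)`. -/
theorem veronese_conformal (n : ℕ) (hn : 1 ≤ n) (x u v : Fin (n + 1) → ℝ)
    (hx : ∑ l, x l ^ 2 = 1) (hu : ∑ l, u l * x l = 0) (hv : ∑ l, v l * x l = 0) :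
    ∑ k, fderiv ℝ (Phi n) x u k * fderiv ℝ (Phi n) x v k
      = (2 * ((n : ℝ) + 1) / n) * ∑ l, u l * v l := by
  have hxx : x ⬝ᵥ x = 1 := by simpa only [dotProduct, sq] using hx
  have hxu : x ⬝ᵥ u = 0 := by rwa [dotProduct_comm]
  have hxv : x ⬝ᵥ v = 0 := by rwa [dotProduct_comm]
  rw [(hasFDerivAt_Phi n x).fderiv]
  change DPhi n x u ⬝ᵥ DPhi n x v = _
  rw [DPhi_dotProduct n hn, hxx, hxu, hxv, dotProduct]
  ring
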